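/- Let Ψ : ℕ → [0,∞) satisfy Ψ(n) ≤ c·n·(n−1)/2 for a constant c > 0, and let θ' > θ. Then for any k with |k(n)| ≤ ‖k‖·e^{θn}, and any t, t' ≥ 0, one has sup_n e^{−θ'n}|e^{−Ψ(n)t}k(n) − e^{−Ψ(n)t'}k(n)| ≤ |t−t'|·(2c/((θ'−θ)²e²))·‖k‖. -/

import Mathlib

/-!
Since `Ψ n ≥ 0`, the map `t ↦ e^{-Ψ(n) t}` is `Ψ(n)`-Lipschitz on `[0, ∞)`, so the `n`-th term is at
most `|t - t'| ‖k‖ Ψ(n) e^{-(θ' - θ) n}`. With `Ψ(n) ≤ c n² / 2` and `x e^{-x} ≤ e⁻¹` applied at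
`x = (θ' - θ) n / 2`, the weight `n² e^{-(θ' - θ) n}` is at most `4 / ((θ' - θ) e)²`.
-/

open Real

lemma abs_exp_neg_sub_exp_neg_le {x y : ℝ} (hx : 0 ≤ x) (hy : 0 ≤ y) :
    |exp (-x) - exp (-y)| ≤ |x - y| := by
  wlog hyx : y ≤ x generalizing x y
  · rw [abs_sub_comm, abs_sub_comm x]
    exact this hy hx (le_of_not_ge hyx)
  have hsplit : exp (-x) = exp (-y) * exp (-(x - y)) := by rw [← exp_add]; ring_nf
  have hmono : exp (-x) ≤ exp (-y) := exp_le_exp.mpr (by linarith)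
  rw [abs_sub_comm, abs_of_nonneg (sub_nonneg.mpr hmono), abs_of_nonneg (sub_nonneg.mpr hyx)]
  calc exp (-y) - exp (-x) = exp (-y) * (1 - exp (-(x - y))) := by rw [hsplit]; ring
    _ ≤ 1 * (x - y) :=
        mul_le_mul (exp_le_one_iff.mpr (by linarith)) (by linarith [one_sub_le_exp_neg (x - y)])
          (sub_nonneg.mpr (exp_le_one_iff.mpr (by linarith))) zero_le_one
    _ = x - y := one_mul _

lemma abs_exp_neg_mul_sub_exp_neg_mul_le {a t t' : ℝ} (ha : 0 ≤ a) (ht : 0 ≤ t) (ht' : 0 ≤ t') :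
    |exp (-(a * t)) - exp (-(a * t'))| ≤ a * |t - t'| := by
  calc |exp (-(a * t)) - exp (-(a * t'))| ≤ |a * t - a * t'| :=
        abs_exp_neg_sub_exp_neg_le (mul_nonneg ha ht) (mul_nonneg ha ht')
    _ = a * |t - t'| := by rw [← mul_sub, abs_mul, abs_of_nonneg ha]

lemma sq_mul_exp_neg_mul_le {δ x : ℝ} (hδ : 0 < δ) (hx : 0 ≤ x) :
    x ^ 2 * exp (-(δ * x)) ≤ 4 / (δ ^ 2 * exp 1 ^ 2) := by
  have hhalf : δ * x / 2 * exp (-(δ * x / 2)) ≤ (exp 1)⁻¹ := by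
    simpa only [exp_neg] using mul_exp_neg_le_exp_neg_one (δ * x / 2)
  have hsq : exp (-(δ * x)) = exp (-(δ * x / 2)) ^ 2 := by rw [← exp_nat_mul]; ring_nf
  rw [le_div_iff₀ (by positivity)]
  calc x ^ 2 * exp (-(δ * x)) * (δ ^ 2 * exp 1 ^ 2)
      = 4 * (δ * x / 2 * exp (-(δ * x / 2)) * exp 1) ^ 2 := by rw [hsq]; ring
    _ ≤ 4 * ((exp 1)⁻¹ * exp 1) ^ 2 := by gcongr
    _ = 4 := by rw [inv_mul_cancel₀ (exp_pos 1).ne', one_pow, mul_one]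

lemma natCast_mul_sub_one_mul_exp_neg_mul_le {δ : ℝ} (hδ : 0 < δ) (n : ℕ) :
    (n : ℝ) * ((n : ℝ) - 1) * exp (-(δ * n)) ≤ 4 / (δ ^ 2 * exp 1 ^ 2) := by
  have hn : (0 : ℝ) ≤ n := n.cast_nonneg
  calc (n : ℝ) * ((n : ℝ) - 1) * exp (-(δ * n)) ≤ (n : ℝ) ^ 2 * exp (-(δ * n)) := by
        gcongr; nlinarith
    _ ≤ 4 / (δ ^ 2 * exp 1 ^ 2) := sq_mul_exp_neg_mul_le hδ hn

theorem mult_semigroup_lipschitz_general (c θ θ' K : ℝ) (hθ : θ < θ')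
    (Ψ : ℕ → ℝ) (hΨ0 : ∀ n, 0 ≤ Ψ n) (hΨ : ∀ n : ℕ, Ψ n ≤ c * n * ((n : ℝ) - 1) / 2)
    (k : ℕ → ℝ) (hk : ∀ n : ℕ, |k n| ≤ K * Real.exp (θ * n))
    (t t' : ℝ) (ht : 0 ≤ t) (ht' : 0 ≤ t') :
    ∀ n : ℕ, Real.exp (-(θ' * n)) *
        |Real.exp (-(Ψ n * t)) * k n - Real.exp (-(Ψ n * t')) * k n| ≤
      |t - t'| * (2 * c / ((θ' - θ) ^ 2 * Real.exp 1 ^ 2)) * K := by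
  intro n
  have hK : 0 ≤ K := by simpa using (abs_nonneg _).trans (hk 0)
  have hc : 0 ≤ c := by linarith [hΨ0 2, hΨ 2]
  have hweight : exp (-(θ' * n)) * exp (θ * n) = exp (-((θ' - θ) * n)) := by
    rw [← exp_add]; ring_nf
  have hΨn := hΨ0 n
  calc exp (-(θ' * n)) * |exp (-(Ψ n * t)) * k n - exp (-(Ψ n * t')) * k n|
      = exp (-(θ' * n)) * (|exp (-(Ψ n * t)) - exp (-(Ψ n * t'))| * |k n|) := by
        rw [← sub_mul, abs_mul]
    _ ≤ exp (-(θ' * n)) * (Ψ n * |t - t'| * (K * exp (θ * n))) := by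
        gcongr
        exacts [abs_exp_neg_mul_sub_exp_neg_mul_le hΨn ht ht', hk n]
    _ = |t - t'| * K * (Ψ n * exp (-((θ' - θ) * n))) := by rw [← hweight]; ring
    _ ≤ |t - t'| * K * (c * n * ((n : ℝ) - 1) / 2 * exp (-((θ' - θ) * n))) := by
        gcongr
        exact hΨ n
    _ = |t - t'| * K * (c / 2 * (n * ((n : ℝ) - 1) * exp (-((θ' - θ) * n)))) := by ring
    _ ≤ |t - t'| * K * (c / 2 * (4 / ((θ' - θ) ^ 2 * exp 1 ^ 2))) := by
        gcongr
        exact natCast_mul_sub_one_mul_exp_neg_mul_le (sub_pos.mpr hθ) n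
    _ = |t - t'| * (2 * c / ((θ' - θ) ^ 2 * exp 1 ^ 2)) * K := by ring

theorem mult_semigroup_lipschitz (c θ θ' K : ℝ) (hc : 0 < c) (hθ : θ < θ')
    (Ψ : ℕ → ℝ) (hΨ0 : ∀ n, 0 ≤ Ψ n) (hΨ : ∀ n : ℕ, Ψ n ≤ c * n * ((n : ℝ) - 1) / 2)
    (k : ℕ → ℝ) (hk : ∀ n : ℕ, |k n| ≤ K * Real.exp (θ * n))
    (t t' : ℝ) (ht : 0 ≤ t) (ht' : 0 ≤ t') :
    ∀ n : ℕ, Real.exp (-(θ' * n)) *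
        |Real.exp (-(Ψ n * t)) * k n - Real.exp (-(Ψ n * t')) * k n| ≤
      |t - t'| * (2 * c / ((θ' - θ) ^ 2 * Real.exp 1 ^ 2)) * K :=
  mult_semigroup_lipschitz_general c θ θ' K hθ Ψ hΨ0 hΨ k hk t t' ht ht'
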